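/- arXiv:1508.00851 — 3 statements merged into one kernel-verified Lean document; each statement's English description precedes it below -/
import Mathlib

section
/- In a full-information graph approximation protocol: if R is a root component of G_r and every process q ∈ R at round r causally influences p by round r' > r, then R is a root component of p's approximation A_p^{r'}(r) of the round-r graph; moreover, for every q ∈ R there exist q' and r'' ∈ (r, r'] with (q → q') ∈ A_p^{r'}(r''). -/
variable {V : Type*}

/-- All graphs in the sequence contain all self-loops. -/
def SelfLoops (G : ℕ → V → V → Prop) : Prop := ∀ s v, G s v v

/-- `R` is a root component of the digraph `E`: a strongly connected component
(mutual reachability inside, maximal) with no in-edges from outside. -/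
def IsRoot (E : V → V → Prop) (R : Set V) : Prop :=
  R.Nonempty ∧
  (∀ q ∈ R, ∀ q' ∈ R, Relation.ReflTransGen E q q') ∧
  (∀ v : V, (∃ q ∈ R, Relation.ReflTransGen E q v ∧ Relation.ReflTransGen E v q) → v ∈ R) ∧
  (∀ q' q : V, q' ∉ R → q ∈ R → ¬ E q' q)

/-- Causal influence: `(q,r) ⤳ (p,r')`. -/
inductive Infl (G : ℕ → V → V → Prop) : V → ℕ → V → ℕ → Prop
  | refl (q r) : Infl G q r q r
  | step {q r q' s p r'} (h1 : r < s) (h2 : s ≤ r') (he : G s q q')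
      (ht : Infl G q' s p r') : Infl G q r p r'

/-- Semantic full-information approximation: edge `(q → q')` of round `s`
is in `p`'s approximation at end of round `r'`. -/
def Approx (G : ℕ → V → V → Prop) (p : V) (r' s : ℕ) (q q' : V) : Prop :=
  G s q q' ∧ Infl G q' s p r'

/-!
Every round-`r` edge ending in `R` lies in `p`'s approximation, because its head influences `p`
by round `r'`. A root component has no in-edges from outside, so every path of `G r` ending in `R`
stays in `R` and survives in the approximation; conversely every edge of the approximation is an
edge of `G r`. Hence `R` is still a root component. Since `r < r'`, the chain witnessing
`(q, r) ⤳ (p, r')` starts with an edge `q → q'` of some round `r'' ∈ (r, r']`, and that edge is in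
the approximation.
-/

theorem Relation.ReflTransGen.mem_and_of_edges_into {E E' : V → V → Prop} {R : Set V}
    (hE : ∀ x y, E x y → y ∈ R → x ∈ R ∧ E' x y) {x y : V}
    (hxy : Relation.ReflTransGen E x y) (hy : y ∈ R) :
    x ∈ R ∧ Relation.ReflTransGen E' x y := by
  induction hxy using Relation.ReflTransGen.head_induction_on with
  | refl => exact ⟨hy, .refl⟩
  | head hab _ ih =>
    obtain ⟨hb, hpath⟩ := ih
    obtain ⟨ha, hedge⟩ := hE _ _ hab hb
    exact ⟨ha, .head hedge hpath⟩

theorem IsRoot.of_le {E E' : V → V → Prop} {R : Set V} (hR : IsRoot E R) (hle : E' ≤ E)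
    (hkeep : ∀ x y, E x y → y ∈ R → E' x y) : IsRoot E' R := by
  obtain ⟨hne, hconn, hmax, hin⟩ := hR
  have hE : ∀ x y, E x y → y ∈ R → x ∈ R ∧ E' x y := fun x y hxy hy =>
    ⟨by_contra fun hx => hin x y hx hy hxy, hkeep x y hxy hy⟩
  refine ⟨hne, fun q hq q' hq' => ((hconn q hq q' hq').mem_and_of_edges_into hE hq').2, ?_,
    fun q' q hq' hq h => hin q' q hq' hq (hle _ _ h)⟩
  rintro v ⟨q, hq, hqv, hvq⟩
  exact hmax v
    ⟨q, hq, Relation.ReflTransGen.mono hle _ _ hqv, Relation.ReflTransGen.mono hle _ _ hvq⟩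

theorem Infl.exists_first_step {G : ℕ → V → V → Prop} {q p : V} {r r' : ℕ}
    (h : Infl G q r p r') (hrr : r < r') :
    ∃ (q' : V) (s : ℕ), r < s ∧ s ≤ r' ∧ G s q q' ∧ Infl G q' s p r' := by
  cases h with
  | refl => exact absurd hrr (lt_irrefl r)
  | step hrs hsr hedge htail => exact ⟨_, _, hrs, hsr, hedge, htail⟩

theorem root_detection (G : ℕ → V → V → Prop) (R : Set V) (p : V) (r r' : ℕ)
    (hrr : r < r') (hroot : IsRoot (G r) R)
    (hinfl : ∀ q ∈ R, Infl G q r p r') :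
    IsRoot (fun x y => Approx G p r' r x y) R ∧
      ∀ q ∈ R, ∃ (q' : V) (r'' : ℕ), r < r'' ∧ r'' ≤ r' ∧ Approx G p r' r'' q q' :=
  ⟨hroot.of_le (fun _ _ h => h.1) fun _ y hxy hy => ⟨hxy, hinfl y hy⟩,
    fun q hq => (hinfl q hq).exists_first_step hrr⟩
end

section
/- Root-consistency of the approximation: if R is a root component of p's approximation A_p^{r'}(r) (r' > r), and for every q ∈ R there exist a process q' and a round r'' ∈ (r, r'] with (q → q') ∈ A_p^{r'}(r''), then R is a root component of the actual graph G_r, and every q ∈ R at round r causally influences p by round r'. -/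
/-!
Every approximated edge of round `r` is an edge of `G r`; conversely an edge of `G r` into
`q ∈ R` is approximated, because `(q, r)` reaches `p` by round `r'` through the outgoing edge
supplied by the hypothesis. So the two graphs agree on the edges entering `R`, and a root
component of the smaller graph with that property is a root component of the larger one.
-/

variable {V : Type*}

theorem Infl.of_approx {G : ℕ → V → V → Prop} {p q q' : V} {r r'' r' : ℕ}
    (hr : r < r'') (hr' : r'' ≤ r') (h : Approx G p r' r'' q q') : Infl G q r p r' :=
  Infl.step hr hr' h.1 h.2

theorem mem_of_reflTransGen_of_pred_closed {E : V → V → Prop} {R : Set V}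
    (hR : ∀ a b, E a b → b ∈ R → a ∈ R) {v q : V} (hvq : Relation.ReflTransGen E v q)
    (hq : q ∈ R) : v ∈ R := by
  induction hvq using Relation.ReflTransGen.head_induction_on with
  | refl => exact hq
  | head hab _ ih => exact hR _ _ hab ih

theorem IsRoot.of_le_of_edges_into {E F : V → V → Prop} {R : Set V} (hR : IsRoot E R)
    (hEF : ∀ a b, E a b → F a b) (hFE : ∀ a b, b ∈ R → F a b → E a b) : IsRoot F R := by
  obtain ⟨hne, hconn, -, hin⟩ := hR
  have hclosed : ∀ a b, F a b → b ∈ R → a ∈ R := fun a b hab hb => by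
    by_contra ha
    exact hin a b ha hb (hFE a b hb hab)
  refine ⟨hne, fun q hq q' hq' => Relation.ReflTransGen.mono hEF _ _ (hconn q hq q' hq'), ?_, ?_⟩
  · rintro v ⟨q, hq, -, hvq⟩
    exact mem_of_reflTransGen_of_pred_closed hclosed hvq hq
  · intro a b ha hb hab
    exact ha (hclosed a b hab hb)

theorem root_consistency_general (G : ℕ → V → V → Prop) (R : Set V) (p : V) (r r' : ℕ)
    (hroot : IsRoot (fun x y => Approx G p r' r x y) R)
    (hout : ∀ q ∈ R, ∃ (q' : V) (r'' : ℕ), r < r'' ∧ r'' ≤ r' ∧ Approx G p r' r'' q q') :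
    IsRoot (G r) R ∧ ∀ q ∈ R, Infl G q r p r' := by
  have hinfl : ∀ q ∈ R, Infl G q r p r' := fun q hq => by
    obtain ⟨q', r'', hr, hr', happrox⟩ := hout q hq
    exact Infl.of_approx hr hr' happrox
  exact ⟨hroot.of_le_of_edges_into (fun _ _ h => h.1) (fun _ b hb h => ⟨h, hinfl b hb⟩), hinfl⟩

theorem root_consistency (G : ℕ → V → V → Prop) (R : Set V) (p : V) (r r' : ℕ)
    (hrr : r < r') (hroot : IsRoot (fun x y => Approx G p r' r x y) R)
    (hout : ∀ q ∈ R, ∃ (q' : V) (r'' : ℕ), r < r'' ∧ r'' ≤ r' ∧ Approx G p r' r'' q q') :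
    IsRoot (G r) R ∧ ∀ q ∈ R, Infl G q r p r' :=
  root_consistency_general G R p r r' hroot hout
end

section
/- If R is the unique root component of G_r and (q, r−1) ⤳ (p, r') holds for all q ∈ R but the approximation shows no in-edge to some singleton root {q} in A_p^{r'}(r), this alone does not certify {q} ∈ roots(G_r); formally: there exist communication graph sequences and p, q, r < r' such that q has no in-edges from other processes in A_p^{r'}(r) yet {q} is not a root component of G_r. -/
variable {V : Type*}

theorem no_in_edge_not_certify_root :
    ∃ (G : ℕ → Fin 3 → Fin 3 → Prop) (p q : Fin 3) (r r' : ℕ),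
      (∀ s v, G s v v) ∧ r < r' ∧ Infl G q (r - 1) p r' ∧
      (∀ q' : Fin 3, q' ≠ q → ¬ Approx G p r' r q' q) ∧
      ¬ IsRoot (G r) {q} := by
  refine ⟨fun s a b => a = b ∨ (s = 1 ∧ ((a = 0 ∧ b = 1) ∨ (a = 2 ∧ b = 0))),
    1, 0, 1, 2, fun s v => Or.inl rfl, one_lt_two, ?_, ?_, ?_⟩
  · -- Infl G 0 0 1 2
    exact Infl.step (by norm_num) (by norm_num) (Or.inr ⟨rfl, Or.inl ⟨rfl, rfl⟩⟩)
      (Infl.step (by norm_num) le_rfl (Or.inl rfl) (Infl.refl 1 2))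
  · -- no approximated in-edge
    rintro q' hq' ⟨-, hinfl⟩
    -- Infl G 0 1 1 2 is false
    cases hinfl with
    | step h1 h2 he ht =>
      rename_i q2 s
      have hs : s = 2 := le_antisymm h2 h1
      subst hs
      have h0 : q2 = 0 := by
        rcases he with h | ⟨h, -⟩
        · exact h.symm
        · omega
      rw [h0] at ht
      cases ht with
      | step h1' h2' _ _ => omega
  · rintro ⟨-, -, -, hno⟩
    exact hno 2 0 (by simp) rfl (Or.inr ⟨rfl, Or.inr ⟨rfl, rfl⟩⟩)
end
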